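/- arXiv:2107.09826 — 3 statements merged into one kernel-verified Lean document; each statement's English description precedes it below -/
import Mathlib

section
/- Let d ≥ 3, 0 < b < 2, σ* = (4-2b)/(d-2), and let δ ∈ (0,1), δ' > 0 satisfy (d-b)/(2-b)·(1+δ')² - (d-2)/(2-b)·(1+δ')^{σ*+2} ≤ 1-δ for the minimal such δ'. Then for any continuous function h: I → ℝ on an interval I with h(t₀) > 1 for some t₀ ∈ I and (d-b)/(2-b)·h(t)² - (d-2)/(2-b)·h(t)^{σ*+2} ≤ 1-δ for all t ∈ I, there exists δ' > 0 (depending only on δ, d, b) such that h(t) ≥ 1 + δ' for all t ∈ I. -/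
/-- Continuity (bootstrap) argument: if a continuous function h on an interval satisfies
φ(h(t)) ≤ 1-δ with φ(y) = ((d-b)/(2-b))y² - ((d-2)/(2-b))y^{σ*+2}, and h(t₀) > 1 somewhere,
then h(t) ≥ 1+δ' on the whole interval for some δ' > 0 depending only on δ, d, b. -/
theorem bootstrap_argument (d : ℕ) (hd : 3 ≤ d) (b σs δ : ℝ)
    (hb : 0 < b) (hb2 : b < 2)
    (hσ : σs = (4 - 2 * b) / ((d : ℝ) - 2))
    (hδ0 : 0 < δ) (hδ1 : δ < 1) :
    ∃ δ' > 0, ∀ (I : Set ℝ), IsPreconnected I → ∀ h : ℝ → ℝ, ContinuousOn h I →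
      (∃ t₀ ∈ I, 1 < h t₀) →
      (∀ t ∈ I, ((d : ℝ) - b) / (2 - b) * (h t) ^ 2
          - ((d : ℝ) - 2) / (2 - b) * (h t) ^ (σs + 2) ≤ 1 - δ) →
      ∀ t ∈ I, 1 + δ' ≤ h t := by
  have hb2' : (0:ℝ) < 2 - b := by linarith
  set φ : ℝ → ℝ := fun y =>
    ((d : ℝ) - b) / (2 - b) * y ^ 2 - ((d : ℝ) - 2) / (2 - b) * y ^ (σs + 2) with hφdef
  have hφ1 : φ 1 = 1 := by
    simp only [hφdef, Real.one_rpow, one_pow, mul_one]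
    field_simp
    ring
  have hcont : ContinuousAt φ 1 := by
    apply ContinuousAt.sub
    · exact ((continuous_pow 2).continuousAt).const_mul _
    · exact (Real.continuousAt_rpow_const 1 (σs + 2) (Or.inl one_ne_zero)).const_mul _
  have hev : ∀ᶠ y in nhds (1:ℝ), 1 - δ < φ y := by
    have : 1 - δ < φ 1 := by rw [hφ1]; linarith
    exact hcont.eventually_const_lt this
  rw [Metric.eventually_nhds_iff] at hev
  obtain ⟨ε, hε, hball⟩ := hev
  refine ⟨ε, hε, ?_⟩
  intro I hI h hc ⟨t₀, ht₀I, ht₀⟩ hφle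
  have hnot : ∀ t ∈ I, ¬ |h t - 1| < ε := by
    intro t htI habs
    have := hball (show dist (h t) 1 < ε by simpa [Real.dist_eq] using habs)
    exact absurd (hφle t htI) (not_le.mpr this)
  have ht₀ge : 1 + ε ≤ h t₀ := by
    have := hnot t₀ ht₀I
    rw [abs_lt, not_and_or] at this
    rcases this with h1 | h1 <;> push_neg at h1 <;> linarith
  intro t htI
  by_contra hlt
  push_neg at hlt
  have hle : h t ≤ 1 - ε := by
    have := hnot t htI
    rw [abs_lt, not_and_or] at this
    rcases this with h1 | h1 <;> push_neg at h1 <;> linarith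
  have h1mem : (1:ℝ) ∈ Set.Icc (h t) (h t₀) := ⟨by linarith, by linarith⟩
  obtain ⟨t', ht'I, ht'⟩ := hI.intermediate_value htI ht₀I hc h1mem
  exact hnot t' ht'I (by simp [ht', hε])
end

section
/- Let d ≥ 3, 0 < b < 4/d, σ* = (4-2b)/(d-2), and c(d) = ((d-2)/2)². If c > -((d+2-2b)² - 4)/(d+2-2b)² · c(d), and ρ = (d-2)/2 - sqrt(c(d)+c), then with r = 2d(d+2-2b)/(d²-2db+4) one has max{1/d, ρ/d} < 1/r < min{1, (d-ρ)/d} and (1+ρ)/d < 1/r; i.e. the exponent r lies in the range where Ḣ^{1,r}_c ∼ Ḣ^{1,r} (equivalence of Sobolev norms defined by -Δ and by P_c). -/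
set_option maxHeartbeats 1000000 in
/-- Exponent verification for the equivalence of Sobolev spaces Ḣ^{1,r}_c ∼ Ḣ^{1,r}:
with ρ = (d-2)/2 - √(c(d)+c) and r = 2d(d+2-2b)/(d²-2db+4), one has
max{1/d, ρ/d} < 1/r < min{1, (d-ρ)/d} and (1+ρ)/d < 1/r. -/
theorem sobolev_equivalence_exponents (d : ℕ) (hd : 3 ≤ d) (b c ρ r : ℝ)
    (hb : 0 < b) (hb4 : b < 4 / (d : ℝ))
    (hc : -(((d : ℝ) + 2 - 2 * b) ^ 2 - 4) / ((d : ℝ) + 2 - 2 * b) ^ 2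
        * (((d : ℝ) - 2) / 2) ^ 2 < c)
    (hρ : ρ = ((d : ℝ) - 2) / 2 - Real.sqrt ((((d : ℝ) - 2) / 2) ^ 2 + c))
    (hr : r = 2 * (d : ℝ) * ((d : ℝ) + 2 - 2 * b) / ((d : ℝ) ^ 2 - 2 * (d : ℝ) * b + 4)) :
    max (1 / (d : ℝ)) (ρ / (d : ℝ)) < 1 / r ∧
    1 / r < min 1 (((d : ℝ) - ρ) / (d : ℝ)) ∧
    (1 + ρ) / (d : ℝ) < 1 / r := by
  have hd3 : (3 : ℝ) ≤ (d : ℝ) := by exact_mod_cast hd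
  have hd0 : (0 : ℝ) < (d : ℝ) := by linarith
  have hdb : b * (d : ℝ) < 4 := by
    rw [div_eq_mul_inv] at hb4
    calc b * (d : ℝ) < (4 * ((d:ℝ))⁻¹) * (d:ℝ) := by
          exact mul_lt_mul_of_pos_right hb4 hd0
      _ = 4 := by field_simp
  have h2bd : 2 * b < (d : ℝ) := by nlinarith
  have hA : (0 : ℝ) < (d : ℝ) + 2 - 2 * b := by linarith
  have hD : (0 : ℝ) < (d : ℝ) ^ 2 - 2 * (d : ℝ) * b + 4 := by nlinarith
  have hr0 : 0 < r := by rw [hr]; positivity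
  -- 1/r = D / (2 d A)
  have hrinv : 1 / r = ((d : ℝ) ^ 2 - 2 * (d : ℝ) * b + 4) /
      (2 * (d : ℝ) * ((d : ℝ) + 2 - 2 * b)) := by
    rw [hr, one_div_div]
  -- key bound on ρ
  have hsq : (((d : ℝ) - 2) / ((d : ℝ) + 2 - 2 * b)) ^ 2 < (((d : ℝ) - 2) / 2) ^ 2 + c := by
    have h1 : -(((d : ℝ) + 2 - 2 * b) ^ 2 - 4) / ((d : ℝ) + 2 - 2 * b) ^ 2
        * (((d : ℝ) - 2) / 2) ^ 2 + (((d : ℝ) - 2) / 2) ^ 2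
        = (((d : ℝ) - 2) / ((d : ℝ) + 2 - 2 * b)) ^ 2 := by
      field_simp
      ring
    linarith [hc, h1.symm.le]
  have hsqrt : ((d : ℝ) - 2) / ((d : ℝ) + 2 - 2 * b)
      < Real.sqrt ((((d : ℝ) - 2) / 2) ^ 2 + c) := by
    have hnn : 0 ≤ ((d : ℝ) - 2) / ((d : ℝ) + 2 - 2 * b) := by
      apply div_nonneg <;> linarith
    exact (Real.lt_sqrt hnn).mpr hsq
  have hρlt : ρ < ((d : ℝ) - 2) / 2 - ((d : ℝ) - 2) / ((d : ℝ) + 2 - 2 * b) := by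
    rw [hρ]; linarith
  have hρA : ρ * (2 * ((d : ℝ) + 2 - 2 * b)) < ((d : ℝ) - 2) * ((d : ℝ) - 2 * b) := by
    have := mul_lt_mul_of_pos_right hρlt (by linarith : (0:ℝ) < 2 * ((d : ℝ) + 2 - 2 * b))
    calc ρ * (2 * ((d : ℝ) + 2 - 2 * b))
        < (((d : ℝ) - 2) / 2 - ((d : ℝ) - 2) / ((d : ℝ) + 2 - 2 * b))
          * (2 * ((d : ℝ) + 2 - 2 * b)) := this
      _ = ((d : ℝ) - 2) * ((d : ℝ) - 2 * b) := by field_simp; ring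
  have h2dA : (0 : ℝ) < 2 * (d : ℝ) * ((d : ℝ) + 2 - 2 * b) := by positivity
  -- (1+ρ)/d < 1/r
  have key : (1 + ρ) / (d : ℝ) < 1 / r := by
    rw [hrinv, div_lt_div_iff₀ hd0 h2dA]
    nlinarith [hρA, hd0]
  have h1d : 1 / (d : ℝ) < 1 / r := by
    rw [hrinv, div_lt_div_iff₀ hd0 h2dA]
    nlinarith
  refine ⟨?_, ?_, key⟩
  · rw [max_lt_iff]
    refine ⟨h1d, ?_⟩
    have : ρ / (d : ℝ) < (1 + ρ) / (d : ℝ) := by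
      gcongr
      linarith
    linarith [key]
  · rw [lt_min_iff]
    constructor
    · rw [hrinv, div_lt_one h2dA]
      nlinarith
    · have h2 : ((d : ℝ) ^ 2 - 2 * (d : ℝ) * b + 4)
          < 2 * ((d : ℝ) + 2 - 2 * b) * ((d : ℝ) - ρ) := by nlinarith [hρA]
      rw [hrinv, div_lt_div_iff₀ h2dA hd0]
      nlinarith [mul_lt_mul_of_pos_left h2 hd0]
end

section
/- Let d ≥ 3, 0 < b < 2, σ = (4-2b)/(d-2). For u in Ḣ^{1}(ℝ^d) radial (or with ∇u ∈ L²) and R > 1, one has ∫_{|x|>R} |x|^{-b} |u(x)|^{σ+2} dx ≲ R^{-((d-1)σ+2b)/2} ‖u‖_{L²}^{(σ+4)/2} ‖∇u‖_{L²}^{σ/2}. -/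
open MeasureTheory Set Metric
open scoped ENNReal NNReal

lemma lintegral_fun_norm_addHaar' {E : Type*} [NormedAddCommGroup E] [NormedSpace ℝ E]
    [MeasurableSpace E] [BorelSpace E] [FiniteDimensional ℝ E] [Nontrivial E]
    (μ : Measure E) [μ.IsAddHaarMeasure] (f : ℝ → ℝ≥0∞) (hf : Measurable f) :
    ∫⁻ x, f ‖x‖ ∂μ = (Module.finrank ℝ E : ℝ≥0∞) * μ (ball 0 1) *
      ∫⁻ y in Ioi (0:ℝ), ENNReal.ofReal (y ^ (Module.finrank ℝ E - 1)) * f y := by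
  have h1 := lintegral_subtype_comap (μ := μ) (measurableSet_singleton (0:E)).compl
    (fun x => f ‖x‖)
  rw [MeasureTheory.restrict_compl_singleton] at h1
  rw [← h1]
  have h2 := (μ.measurePreserving_homeomorphUnitSphereProd).lintegral_comp
    (f := fun p : sphere (0:E) 1 × Ioi (0:ℝ) => f p.2)
    (hf.comp (measurable_subtype_coe.comp measurable_snd))
  simp only [homeomorphUnitSphereProd_apply_snd_coe] at h2
  rw [h2]
  have h3 : ∫⁻ b : sphere (0:E) 1 × Ioi (0:ℝ), f b.2
        ∂μ.toSphere.prod (Measure.volumeIoiPow (Module.finrank ℝ E - 1))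
      = (∫⁻ _x : sphere (0:E) 1, (1:ℝ≥0∞) ∂μ.toSphere) *
        ∫⁻ y : Ioi (0:ℝ), f y ∂Measure.volumeIoiPow (Module.finrank ℝ E - 1) := by
    rw [← lintegral_prod_mul (f := fun _ : sphere (0:E) 1 => (1:ℝ≥0∞))
      (g := fun y : Ioi (0:ℝ) => f y) aemeasurable_const
      ((hf.comp measurable_subtype_coe).aemeasurable)]
    simp
  rw [h3, lintegral_one, Measure.toSphere_apply_univ]
  congr 1
  have h5 := lintegral_withDensity_eq_lintegral_mul (Measure.comap Subtype.val volume)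
    (f := fun r : Ioi (0:ℝ) => ENNReal.ofReal (r.1 ^ (Module.finrank ℝ E - 1)))
    (by exact (measurable_subtype_coe.pow_const _).ennreal_ofReal)
    (g := fun y : Ioi (0:ℝ) => f y) (by exact hf.comp measurable_subtype_coe)
  rw [Measure.volumeIoiPow, h5]
  have h4 := lintegral_subtype_comap (μ := volume) (s := Ioi (0:ℝ)) measurableSet_Ioi
    (fun y : ℝ => ENNReal.ofReal (y ^ (Module.finrank ℝ E - 1)) * f y)
  exact h4

lemma radial_fderiv_norm {E : Type*} [NormedAddCommGroup E] [InnerProductSpace ℝ E]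
    [FiniteDimensional ℝ E] {u : E → ℂ} (g : ℝ → ℂ) (hg : ∀ x, u x = g ‖x‖)
    (hdiff : Differentiable ℝ u) {x y : E} (h : ‖x‖ = ‖y‖) :
    ‖fderiv ℝ u x‖ = ‖fderiv ℝ u y‖ := by
  set A : E ≃ₗᵢ[ℝ] E := Submodule.reflection (ℝ ∙ (x - y))ᗮ with hA
  have hAx : A x = y := Submodule.reflection_sub h
  have hcomp : u ∘ A = u := by
    funext z
    simp only [Function.comp_apply, hg, A.norm_map]
  have hder : HasFDerivAt (u ∘ A) ((fderiv ℝ u (A x)).comp (A : E →L[ℝ] E)) x :=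
    (hdiff (A x)).hasFDerivAt.comp x A.hasFDerivAt
  have : fderiv ℝ u x = (fderiv ℝ u (A x)).comp (A : E →L[ℝ] E) := by
    conv_lhs => rw [← hcomp]
    exact hder.fderiv
  rw [this, hAx]
  exact ContinuousLinearMap.opNorm_comp_linearIsometryEquiv _ A

lemma memLp_two_lintegral_sq_lt_top {α F : Type*} [MeasurableSpace α] {μ : Measure α}
    [NormedAddCommGroup F] {f : α → F} (hf : MemLp f 2 μ) :
    ∫⁻ x, (‖f x‖₊ : ℝ≥0∞) ^ 2 ∂μ < ⊤ := by
  have h := hf.eLpNorm_lt_top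
  rw [eLpNorm_eq_lintegral_rpow_enorm_toReal two_ne_zero ENNReal.ofNat_ne_top] at h
  simp only [enorm_eq_nnnorm] at h
  have h2 : ∫⁻ x, (‖f x‖₊ : ℝ≥0∞) ^ (2:ℝ≥0∞).toReal ∂μ < ⊤ := by
    by_contra hc
    rw [not_lt, top_le_iff] at hc
    rw [hc] at h
    simp [ENNReal.top_rpow_of_pos] at h
  calc ∫⁻ x, (‖f x‖₊ : ℝ≥0∞) ^ 2 ∂μ = ∫⁻ x, (‖f x‖₊ : ℝ≥0∞) ^ (2:ℝ≥0∞).toReal ∂μ := by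
        congr 1; funext x
        rw [ENNReal.toReal_ofNat, ← ENNReal.rpow_natCast]
        norm_num
    _ < ⊤ := h2

lemma integral_norm_sq_eq_toReal {α F : Type*} [MeasurableSpace α] {μ : Measure α}
    [NormedAddCommGroup F] {f : α → F} (hf : AEStronglyMeasurable f μ) :
    ∫ x, ‖f x‖ ^ 2 ∂μ = (∫⁻ x, (‖f x‖₊ : ℝ≥0∞) ^ 2 ∂μ).toReal := by
  rw [integral_eq_lintegral_of_nonneg_ae (Filter.Eventually.of_forall fun x => sq_nonneg _)
    (by exact (hf.norm.pow 2))]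
  congr 1
  apply lintegral_congr fun x => ?_
  rw [ENNReal.ofReal_pow (norm_nonneg _)]
  congr 1
  exact (ofReal_norm _)

lemma lintegral_mul_le_sqrt_mul_sqrt {α : Type*} [MeasurableSpace α] (μ : Measure α)
    (f g : α → ℝ≥0∞) (hf : AEMeasurable f μ) (hg : AEMeasurable g μ) :
    ∫⁻ a, f a * g a ∂μ ≤ (∫⁻ a, f a ^ 2 ∂μ) ^ (1/2:ℝ) * (∫⁻ a, g a ^ 2 ∂μ) ^ (1/2:ℝ) := by
  have hpq : Real.HolderConjugate 2 2 := Real.HolderConjugate.two_two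
  have h := ENNReal.lintegral_mul_le_Lp_mul_Lq μ hpq hf hg
  have e1 : ∀ (h : α → ℝ≥0∞), ∫⁻ a, h a ^ (2:ℝ) ∂μ = ∫⁻ a, h a ^ 2 ∂μ := by
    intro h; apply lintegral_congr fun a => ?_
    rw [show (2:ℝ) = ((2:ℕ):ℝ) by norm_num, ENNReal.rpow_natCast]
  rw [e1, e1] at h
  exact h

lemma strauss_core (G D : ℝ → ℂ) (H : ℝ → ℝ)
    (hG : ∀ s, HasDerivAt G (D s) s)
    (hD : ∀ s, ‖D s‖ ≤ H s)
    (hHmeas : Measurable H)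
    (hvanish : ∀ ε > 0, ∀ T : ℝ, ∃ t, T < t ∧ ‖G t‖ ^ 2 < ε)
    (r : ℝ)
    (hIfin : ∫⁻ s in Ioi r, ENNReal.ofReal ‖G s‖ * ENNReal.ofReal (H s) ∂volume < ⊤) :
    ENNReal.ofReal (‖G r‖ ^ 2) ≤
      2 * ∫⁻ s in Ioi r, ENNReal.ofReal ‖G s‖ * ENNReal.ofReal (H s) ∂volume := by
  set J := ∫⁻ s in Ioi r, ENNReal.ofReal ‖G s‖ * ENNReal.ofReal (H s) ∂volume with hJ
  have hGcont : Continuous G := by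
    rw [continuous_iff_continuousAt]; exact fun s => (hG s).continuousAt
  set ψ : ℝ → ℝ := fun s => 2 * ((starRingEnd ℂ) (G s) * D s).re with hψ
  -- derivative of ‖G‖²
  have hφ : ∀ s, HasDerivAt (fun t => ‖G t‖ ^ 2) (ψ s) s := by
    intro s
    have hre : HasDerivAt (fun t => (G t).re) ((D s).re) s :=
      (Complex.reCLM.hasFDerivAt.comp_hasDerivAt s (hG s))
    have him : HasDerivAt (fun t => (G t).im) ((D s).im) s :=
      (Complex.imCLM.hasFDerivAt.comp_hasDerivAt s (hG s))
    have h : HasDerivAt (fun t => (G t).re * (G t).re + (G t).im * (G t).im) _ s :=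
      (hre.mul hre).add (him.mul him)
    have hfun : (fun t => (G t).re * (G t).re + (G t).im * (G t).im)
        = fun t => ‖G t‖ ^ 2 := by
      funext t
      rw [← Complex.normSq_apply, Complex.sq_norm]
    rw [hfun] at h
    convert h using 1
    simp only [hψ, Complex.mul_re, Complex.conj_re, Complex.conj_im]
    ring
  have hψbound : ∀ s, |ψ s| ≤ 2 * (‖G s‖ * H s) := by
    intro s
    have h1 : |((starRingEnd ℂ) (G s) * D s).re| ≤ ‖G s‖ * ‖D s‖ := by
      calc |((starRingEnd ℂ) (G s) * D s).re| ≤ ‖(starRingEnd ℂ) (G s) * D s‖ :=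
            Complex.abs_re_le_norm _
        _ = ‖G s‖ * ‖D s‖ := by
            rw [norm_mul, Complex.norm_conj]
    calc |ψ s| = 2 * |((starRingEnd ℂ) (G s) * D s).re| := by rw [hψ, abs_mul, abs_two]
      _ ≤ 2 * (‖G s‖ * ‖D s‖) := by nlinarith [norm_nonneg (G s), norm_nonneg (D s), h1]
      _ ≤ 2 * (‖G s‖ * H s) := by
          nlinarith [mul_le_mul_of_nonneg_left (hD s) (norm_nonneg (G s))]
  have hDeq : D = deriv G := funext fun s => ((hG s).deriv).symm
  have hψmeas : Measurable ψ := by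
    rw [hψ, hDeq]
    have m1 : Measurable (fun s => (starRingEnd ℂ) (G s)) :=
      (Complex.continuous_conj.comp hGcont).measurable
    exact measurable_const.mul (Complex.measurable_re.comp (m1.mul (measurable_deriv G)))
  -- pointwise enorm bound
  have hψenorm : ∀ s, (‖ψ s‖₊ : ℝ≥0∞) ≤ 2 * (ENNReal.ofReal ‖G s‖ * ENNReal.ofReal (H s)) := by
    intro s
    rw [← enorm_eq_nnnorm, Real.enorm_eq_ofReal_abs]
    calc ENNReal.ofReal |ψ s| ≤ ENNReal.ofReal (2 * (‖G s‖ * H s)) :=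
          ENNReal.ofReal_le_ofReal (hψbound s)
      _ ≤ 2 * (ENNReal.ofReal ‖G s‖ * ENNReal.ofReal (H s)) := by
          rw [ENNReal.ofReal_mul (by norm_num), ENNReal.ofReal_mul (norm_nonneg _)]
          simp [ENNReal.ofReal_ofNat]
  -- integrability of ψ on Ioc r t
  have hψint : ∀ t, r < t → IntegrableOn ψ (Ioc r t) volume := by
    intro t ht
    refine ⟨hψmeas.aestronglyMeasurable, ?_⟩
    show (∫⁻ s in Ioc r t, (‖ψ s‖₊ : ℝ≥0∞) ∂volume) < ⊤
    calc ∫⁻ s in Ioc r t, (‖ψ s‖₊ : ℝ≥0∞) ∂volume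
        ≤ ∫⁻ s in Ioc r t, 2 * (ENNReal.ofReal ‖G s‖ * ENNReal.ofReal (H s)) ∂volume :=
          lintegral_mono fun s => hψenorm s
      _ ≤ ∫⁻ s in Ioi r, 2 * (ENNReal.ofReal ‖G s‖ * ENNReal.ofReal (H s)) ∂volume :=
          lintegral_mono_set Ioc_subset_Ioi_self
      _ = 2 * J := by rw [lintegral_const_mul (f := fun s => ENNReal.ofReal ‖G s‖ * ENNReal.ofReal (H s)) _ ((Measurable.ennreal_ofReal
            hGcont.norm.measurable).mul hHmeas.ennreal_ofReal)]
      _ < ⊤ := by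
          exact ENNReal.mul_lt_top (by norm_num) hIfin
  -- main estimate via FTC
  have hkey : ∀ t, r < t → ‖G r‖ ^ 2 ≤ ‖G t‖ ^ 2 + (2 * J).toReal := by
    intro t ht
    have hII : IntervalIntegrable ψ volume r t := by
      rw [intervalIntegrable_iff_integrableOn_Ioc_of_le ht.le]
      exact hψint t ht
    have hftc := intervalIntegral.integral_eq_sub_of_hasDerivAt
      (fun s _ => hφ s) hII
    have habs : |∫ s in r..t, ψ s| ≤ (2 * J).toReal := by
      calc |∫ s in r..t, ψ s| ≤ ∫ s in r..t, |ψ s| := by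
            have := intervalIntegral.norm_integral_le_integral_norm (f := ψ) (μ := volume) ht.le
            simpa [Real.norm_eq_abs] using this
        _ = ∫ s in Ioc r t, |ψ s| ∂volume := by
            rw [intervalIntegral.integral_of_le ht.le]
        _ = (∫⁻ s in Ioc r t, ENNReal.ofReal |ψ s| ∂volume).toReal := by
            rw [integral_eq_lintegral_of_nonneg_ae
              (Filter.Eventually.of_forall fun s => abs_nonneg _)
              (hψmeas.abs.aestronglyMeasurable)]
        _ ≤ (2 * J).toReal := by
            apply ENNReal.toReal_mono (by simp [ENNReal.mul_ne_top, hIfin.ne])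
            calc ∫⁻ s in Ioc r t, ENNReal.ofReal |ψ s| ∂volume
                = ∫⁻ s in Ioc r t, (‖ψ s‖₊ : ℝ≥0∞) ∂volume := by
                  apply lintegral_congr fun s => (Real.enorm_eq_ofReal_abs _).symm
              _ ≤ ∫⁻ s in Ioc r t, 2 * (ENNReal.ofReal ‖G s‖ * ENNReal.ofReal (H s)) ∂volume :=
                  lintegral_mono fun s => hψenorm s
              _ ≤ ∫⁻ s in Ioi r, 2 * (ENNReal.ofReal ‖G s‖ * ENNReal.ofReal (H s)) ∂volume :=
                  lintegral_mono_set Ioc_subset_Ioi_self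
              _ = 2 * J := by rw [lintegral_const_mul (f := fun s => ENNReal.ofReal ‖G s‖ * ENNReal.ofReal (H s)) _ ((Measurable.ennreal_ofReal
                    hGcont.norm.measurable).mul hHmeas.ennreal_ofReal)]
    nlinarith [hftc, habs, abs_nonneg (∫ s in r..t, ψ s), le_abs_self (∫ s in r..t, ψ s),
      neg_abs_le (∫ s in r..t, ψ s)]
  have hfinal : ‖G r‖ ^ 2 ≤ (2 * J).toReal := by
    by_contra hc
    push_neg at hc
    set ε := ‖G r‖ ^ 2 - (2 * J).toReal with hε
    have hεpos : 0 < ε := by linarith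
    obtain ⟨t, ht, hGt⟩ := hvanish ε hεpos r
    have := hkey t ht
    linarith
  calc ENNReal.ofReal (‖G r‖ ^ 2) ≤ ENNReal.ofReal ((2 * J).toReal) :=
        ENNReal.ofReal_le_ofReal hfinal
    _ ≤ 2 * J := ENNReal.ofReal_toReal_le
/-- Exterior decay estimate for radial H¹ functions:
∫_{|x|>R} |x|^{-b}|u|^{σ+2} ≤ C R^{-((d-1)σ+2b)/2} ‖u‖_{L²}^{(σ+4)/2} ‖∇u‖_{L²}^{σ/2}. -/
theorem exterior_decay_estimate (d : ℕ) (hd : 3 ≤ d) (b σ : ℝ)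
    (hb : 0 < b) (hb2 : b < 2)
    (hσ : σ = (4 - 2 * b) / ((d : ℝ) - 2)) :
    ∃ C > 0, ∀ u : EuclideanSpace ℝ (Fin d) → ℂ,
      (∃ g : ℝ → ℂ, ∀ x, u x = g ‖x‖) →
      Differentiable ℝ u →
      MemLp u 2 volume →
      MemLp (fun x => fderiv ℝ u x) 2 volume →
      ∀ R : ℝ, 1 < R →
        (∫ x in {x : EuclideanSpace ℝ (Fin d) | R < ‖x‖}, ‖x‖ ^ (-b) * ‖u x‖ ^ (σ + 2))
          ≤ C * R ^ (-(((d : ℝ) - 1) * σ + 2 * b) / 2)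
            * (∫ x : EuclideanSpace ℝ (Fin d), ‖u x‖ ^ 2) ^ ((σ + 4) / 4)
            * (∫ x : EuclideanSpace ℝ (Fin d), ‖fderiv ℝ u x‖ ^ 2) ^ (σ / 4) := by
  have hd0 : 0 < d := by omega
  have hdR : (2:ℝ) < (d:ℝ) := by exact_mod_cast by omega
  have hσpos : 0 < σ := by
    rw [hσ]; apply div_pos <;> linarith
  set E := EuclideanSpace ℝ (Fin d) with hE
  set c : E := EuclideanSpace.single (⟨0, hd0⟩ : Fin d) (1:ℝ) with hcdef
  have hc : ‖c‖ = 1 := by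
    rw [hcdef]; rw [EuclideanSpace.norm_single]; norm_num
  haveI : Nontrivial E := ⟨c, 0, by intro h; rw [h] at hc; simp at hc⟩
  have hfr : Module.finrank ℝ E = d := finrank_euclideanSpace_fin
  set cd : ℝ≥0∞ := (d : ℝ≥0∞) * volume (Metric.ball (0:E) 1) with hcddef
  have hcd0 : cd ≠ 0 := by
    rw [hcddef]
    apply mul_ne_zero (by exact_mod_cast hd0.ne') (measure_ball_pos _ _ one_pos).ne'
  have hcdT : cd ≠ ⊤ :=
    ENNReal.mul_ne_top (ENNReal.natCast_ne_top d) measure_ball_lt_top.ne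
  set cd' : ℝ := cd.toReal with hcd'def
  have hcd'pos : 0 < cd' := ENNReal.toReal_pos hcd0 hcdT
  refine ⟨2 ^ (σ/2) * cd' ^ (-(σ/2)), by positivity, ?_⟩
  rintro u ⟨g, hg⟩ hdiff hu2 hD2 R hR
  have hR0 : (0:ℝ) < R := by linarith
  have hucont : Continuous u := hdiff.continuous
  set G : ℝ → ℂ := fun s => u (s • c) with hGdef
  set D : ℝ → ℂ := fun s => (fderiv ℝ u (s • c)) c with hDdef
  set H : ℝ → ℝ := fun s => ‖fderiv ℝ u (s • c)‖ with hHdef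
  have hsmulcont : Continuous (fun s : ℝ => s • c) := continuous_id.smul continuous_const
  have hGd : ∀ s, HasDerivAt G (D s) s := fun s => by
    have h1 : HasDerivAt (fun r : ℝ => r • c) c s := by
      simpa using (hasDerivAt_id s).smul_const c
    exact (hdiff (s • c)).hasFDerivAt.comp_hasDerivAt s h1
  have hDH : ∀ s, ‖D s‖ ≤ H s := fun s => by
    calc ‖D s‖ ≤ ‖fderiv ℝ u (s • c)‖ * ‖c‖ := (fderiv ℝ u (s • c)).le_opNorm c
      _ = H s := by rw [hc, mul_one]
  have hHmeas : Measurable H :=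
    ((measurable_fderiv ℝ u).comp hsmulcont.measurable).norm
  have hnormsmul : ∀ s : ℝ, 0 ≤ s → ‖s • c‖ = s := fun s hs => by
    rw [norm_smul, hc, mul_one, Real.norm_eq_abs, abs_of_nonneg hs]
  have huG : ∀ x : E, u x = G ‖x‖ := fun x => by
    rw [hGdef]; simp only []
    rw [hg x, hg (‖x‖ • c), hnormsmul _ (norm_nonneg x)]
  have hHrad : ∀ x : E, ‖fderiv ℝ u x‖ = H ‖x‖ := fun x => by
    rw [hHdef]; simp only []
    exact radial_fderiv_norm g hg hdiff (by rw [hnormsmul _ (norm_nonneg x)])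
  set W : ℝ → ℝ≥0∞ := fun y => ENNReal.ofReal (y ^ (d - 1)) with hWdef
  set F₁ : ℝ → ℝ≥0∞ := fun s => ENNReal.ofReal ‖G s‖ with hF₁def
  set F₂ : ℝ → ℝ≥0∞ := fun s => ENNReal.ofReal (H s) with hF₂def
  have hF₁meas : Measurable F₁ := (hucont.comp hsmulcont).norm.measurable.ennreal_ofReal
  have hF₂meas : Measurable F₂ := hHmeas.ennreal_ofReal
  have hWmeas : Measurable W := (measurable_id.pow_const _).ennreal_ofReal
  set A₀ : ℝ≥0∞ := ∫⁻ y in Set.Ioi (0:ℝ), W y * F₁ y ^ 2 with hA₀def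
  set B₀ : ℝ≥0∞ := ∫⁻ y in Set.Ioi (0:ℝ), W y * F₂ y ^ 2 with hB₀def
  have hA : ∫⁻ x, (‖u x‖₊ : ℝ≥0∞) ^ 2 = cd * A₀ := by
    have h := lintegral_fun_norm_addHaar' (volume : Measure E) (fun y => F₁ y ^ 2)
      (hF₁meas.pow_const 2)
    rw [hfr] at h
    calc ∫⁻ x, (‖u x‖₊ : ℝ≥0∞) ^ 2 = ∫⁻ x : E, (fun y => F₁ y ^ 2) ‖x‖ := by
          apply lintegral_congr fun x => ?_
          rw [hF₁def]
          simp only []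
          rw [← huG x, ofReal_norm, enorm_eq_nnnorm]
      _ = cd * A₀ := by
          rw [h, hA₀def, hcddef]
  have hB : ∫⁻ x, (‖fderiv ℝ u x‖₊ : ℝ≥0∞) ^ 2 = cd * B₀ := by
    have h := lintegral_fun_norm_addHaar' (volume : Measure E) (fun y => F₂ y ^ 2)
      (hF₂meas.pow_const 2)
    rw [hfr] at h
    calc ∫⁻ x, (‖fderiv ℝ u x‖₊ : ℝ≥0∞) ^ 2 = ∫⁻ x : E, (fun y => F₂ y ^ 2) ‖x‖ := by
          apply lintegral_congr fun x => ?_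
          rw [hF₂def]
          simp only []
          rw [← hHrad x, ofReal_norm, enorm_eq_nnnorm]
      _ = cd * B₀ := by
          rw [h, hB₀def, hcddef]
  have hA₀T : A₀ ≠ ⊤ := by
    intro hT
    have h1 := memLp_two_lintegral_sq_lt_top hu2
    rw [hA, hT, ENNReal.mul_top hcd0] at h1
    exact (lt_irrefl _ h1)
  have hB₀T : B₀ ≠ ⊤ := by
    intro hT
    have h1 := memLp_two_lintegral_sq_lt_top hD2
    rw [hB, hT, ENNReal.mul_top hcd0] at h1
    exact (lt_irrefl _ h1)
  have hvanish : ∀ ε > 0, ∀ T : ℝ, ∃ t, T < t ∧ ‖G t‖ ^ 2 < ε := by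
    intro ε hε T
    by_contra hcon
    push_neg at hcon
    set T' : ℝ := max T 1 with hT'
    have hsub : Set.Ioi T' ⊆ Set.Ioi (0:ℝ) := fun y hy =>
      lt_trans (lt_of_lt_of_le one_pos (le_max_right T 1)) hy
    have hlow : ∀ y ∈ Set.Ioi T', ENNReal.ofReal ε ≤ W y * F₁ y ^ 2 := by
      intro y hy
      have hy1 : 1 ≤ y := le_of_lt (lt_of_le_of_lt (le_max_right T 1) hy)
      have hW1 : 1 ≤ W y := by
        rw [hWdef]
        simp only []
        rw [show (1:ℝ≥0∞) = ENNReal.ofReal 1 by simp]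
        exact ENNReal.ofReal_le_ofReal (one_le_pow₀ hy1)
      have hF : ENNReal.ofReal ε ≤ F₁ y ^ 2 := by
        rw [hF₁def]
        simp only []
        rw [← ENNReal.ofReal_pow (norm_nonneg _)]
        exact ENNReal.ofReal_le_ofReal (hcon y (lt_of_le_of_lt (le_max_left T 1) hy))
      calc ENNReal.ofReal ε ≤ F₁ y ^ 2 := hF
        _ = 1 * F₁ y ^ 2 := (one_mul _).symm
        _ ≤ W y * F₁ y ^ 2 := mul_le_mul_left hW1 _
    have htop : (⊤:ℝ≥0∞) ≤ A₀ := by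
      calc (⊤:ℝ≥0∞) = ENNReal.ofReal ε * volume (Set.Ioi T') := by
            rw [Real.volume_Ioi, ENNReal.mul_top (by simp only [ne_eq, ENNReal.ofReal_eq_zero, not_le]; exact hε)]
        _ = ∫⁻ _y in Set.Ioi T', ENNReal.ofReal ε := (setLIntegral_const _ _).symm
        _ ≤ ∫⁻ y in Set.Ioi T', W y * F₁ y ^ 2 := setLIntegral_mono' measurableSet_Ioi hlow
        _ ≤ A₀ := by rw [hA₀def]; exact lintegral_mono_set hsub
    exact hA₀T (top_le_iff.mp htop)
  have hCS : ∀ r : ℝ, 1 < r →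
      ∫⁻ s in Set.Ioi r, F₁ s * F₂ s ≤
        (ENNReal.ofReal (r ^ (d-1)))⁻¹ * (A₀ ^ (1/2:ℝ) * B₀ ^ (1/2:ℝ)) := by
    intro r hr
    have hr0 : (0:ℝ) < r := by linarith
    set a : ℝ≥0∞ := ENNReal.ofReal (r ^ (d-1)) with ha
    have ha0 : a ≠ 0 := by
      rw [ha]
      simp only [ne_eq, ENNReal.ofReal_eq_zero, not_le]
      positivity
    have haT : a ≠ ⊤ := ENNReal.ofReal_ne_top
    set V : ℝ → ℝ≥0∞ := fun s => ENNReal.ofReal (Real.sqrt (s ^ (d-1))) with hV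
    have hVmeas : Measurable V :=
      (Real.continuous_sqrt.measurable.comp (measurable_id.pow_const _)).ennreal_ofReal
    have hVV : ∀ s : ℝ, 0 < s → V s * V s = W s := by
      intro s hs
      rw [hV, hWdef]
      simp only []
      rw [← ENNReal.ofReal_mul (Real.sqrt_nonneg _), Real.mul_self_sqrt (by positivity)]
    have step1 : ∫⁻ s in Set.Ioi r, F₁ s * F₂ s ≤
        a⁻¹ * ∫⁻ s in Set.Ioi r, W s * (F₁ s * F₂ s) := by
      rw [← lintegral_const_mul (f := fun s => W s * (F₁ s * F₂ s)) _ ((hWmeas.mul (hF₁meas.mul hF₂meas)))]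
      apply setLIntegral_mono' measurableSet_Ioi
      intro s hs
      have haW : a ≤ W s := by
        rw [ha, hWdef]
        exact ENNReal.ofReal_le_ofReal (pow_le_pow_left₀ hr0.le (le_of_lt hs) _)
      have h1 : (1:ℝ≥0∞) ≤ a⁻¹ * W s := by
        calc (1:ℝ≥0∞) = a⁻¹ * a := (ENNReal.inv_mul_cancel ha0 haT).symm
          _ ≤ a⁻¹ * W s := mul_le_mul_right haW _
      calc F₁ s * F₂ s = 1 * (F₁ s * F₂ s) := (one_mul _).symm
        _ ≤ (a⁻¹ * W s) * (F₁ s * F₂ s) := mul_le_mul_left h1 _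
        _ = a⁻¹ * (W s * (F₁ s * F₂ s)) := by ring
    have step2 : ∫⁻ s in Set.Ioi r, W s * (F₁ s * F₂ s) ≤ A₀ ^ (1/2:ℝ) * B₀ ^ (1/2:ℝ) := by
      have he : ∫⁻ s in Set.Ioi r, W s * (F₁ s * F₂ s) =
          ∫⁻ s in Set.Ioi r, (V s * F₁ s) * (V s * F₂ s) := by
        apply setLIntegral_congr_fun measurableSet_Ioi
        intro s hs
        dsimp only
        rw [show (V s * F₁ s) * (V s * F₂ s) = (V s * V s) * (F₁ s * F₂ s) by ring,
          hVV s (lt_trans hr0 hs)]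
      have hcs := lintegral_mul_le_sqrt_mul_sqrt (volume.restrict (Set.Ioi r))
        (fun s => V s * F₁ s) (fun s => V s * F₂ s)
        ((hVmeas.mul hF₁meas).aemeasurable) ((hVmeas.mul hF₂meas).aemeasurable)
      have hsq₁ : ∫⁻ s in Set.Ioi r, (V s * F₁ s) ^ 2 ≤ A₀ := by
        have : ∫⁻ s in Set.Ioi r, (V s * F₁ s) ^ 2 = ∫⁻ s in Set.Ioi r, W s * F₁ s ^ 2 := by
          apply setLIntegral_congr_fun measurableSet_Ioi
          intro s hs
          dsimp only
          rw [mul_pow, sq (V s), hVV s (lt_trans hr0 hs)]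
        rw [this, hA₀def]
        exact lintegral_mono_set fun y hy => lt_trans hr0 hy
      have hsq₂ : ∫⁻ s in Set.Ioi r, (V s * F₂ s) ^ 2 ≤ B₀ := by
        have : ∫⁻ s in Set.Ioi r, (V s * F₂ s) ^ 2 = ∫⁻ s in Set.Ioi r, W s * F₂ s ^ 2 := by
          apply setLIntegral_congr_fun measurableSet_Ioi
          intro s hs
          dsimp only
          rw [mul_pow, sq (V s), hVV s (lt_trans hr0 hs)]
        rw [this, hB₀def]
        exact lintegral_mono_set fun y hy => lt_trans hr0 hy
      calc ∫⁻ s in Set.Ioi r, W s * (F₁ s * F₂ s)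
          = ∫⁻ s in Set.Ioi r, (V s * F₁ s) * (V s * F₂ s) := he
        _ ≤ (∫⁻ s in Set.Ioi r, (V s * F₁ s) ^ 2) ^ (1/2:ℝ) *
            (∫⁻ s in Set.Ioi r, (V s * F₂ s) ^ 2) ^ (1/2:ℝ) := hcs
        _ ≤ A₀ ^ (1/2:ℝ) * B₀ ^ (1/2:ℝ) :=
            mul_le_mul' (ENNReal.rpow_le_rpow hsq₁ (by norm_num))
              (ENNReal.rpow_le_rpow hsq₂ (by norm_num))
    calc ∫⁻ s in Set.Ioi r, F₁ s * F₂ s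
        ≤ a⁻¹ * ∫⁻ s in Set.Ioi r, W s * (F₁ s * F₂ s) := step1
      _ ≤ a⁻¹ * (A₀ ^ (1/2:ℝ) * B₀ ^ (1/2:ℝ)) := mul_le_mul_right step2 _
  set Kε : ℝ≥0∞ := 2 * (ENNReal.ofReal (R ^ (d-1)))⁻¹ * (A₀ ^ (1/2:ℝ) * B₀ ^ (1/2:ℝ)) with hKεdef
  have hKεT : Kε ≠ ⊤ := by
    rw [hKεdef]
    apply ENNReal.mul_ne_top (ENNReal.mul_ne_top (by norm_num) ?_)
      (ENNReal.mul_ne_top ?_ ?_)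
    · exact ENNReal.inv_ne_top.mpr (by positivity)
    · exact (ENNReal.rpow_lt_top_of_nonneg (by norm_num) hA₀T).ne
    · exact (ENNReal.rpow_lt_top_of_nonneg (by norm_num) hB₀T).ne
  set K : ℝ := Kε.toReal with hKdef
  have hK0 : 0 ≤ K := ENNReal.toReal_nonneg
  have hKbd : ∀ x : E, R < ‖x‖ → ‖u x‖ ^ 2 ≤ K := by
    intro x hx
    have hx1 : 1 < ‖x‖ := lt_trans hR hx
    have hIeq : ∫⁻ s in Set.Ioi ‖x‖, ENNReal.ofReal ‖G s‖ * ENNReal.ofReal (H s) ∂volume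
        = ∫⁻ s in Set.Ioi ‖x‖, F₁ s * F₂ s := rfl
    have hCSx := hCS ‖x‖ hx1
    have hfinx : ∫⁻ s in Set.Ioi ‖x‖, ENNReal.ofReal ‖G s‖ * ENNReal.ofReal (H s) ∂volume < ⊤ := by
      rw [hIeq]
      apply lt_of_le_of_lt hCSx
      apply ENNReal.mul_lt_top
      · exact ENNReal.inv_lt_top.mpr (ENNReal.ofReal_pos.mpr (by positivity))
      · exact ENNReal.mul_lt_top (ENNReal.rpow_lt_top_of_nonneg (by norm_num) hA₀T)
          (ENNReal.rpow_lt_top_of_nonneg (by norm_num) hB₀T)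
    have hs := strauss_core G D H hGd hDH hHmeas hvanish ‖x‖ hfinx
    rw [hIeq] at hs
    have hle : ENNReal.ofReal (‖u x‖ ^ 2) ≤ Kε := by
      rw [huG x]
      calc ENNReal.ofReal (‖G ‖x‖‖ ^ 2) ≤ 2 * ∫⁻ s in Set.Ioi ‖x‖, F₁ s * F₂ s := hs
        _ ≤ 2 * ((ENNReal.ofReal (‖x‖ ^ (d-1)))⁻¹ * (A₀ ^ (1/2:ℝ) * B₀ ^ (1/2:ℝ))) :=
            mul_le_mul_right hCSx _
        _ ≤ 2 * ((ENNReal.ofReal (R ^ (d-1)))⁻¹ * (A₀ ^ (1/2:ℝ) * B₀ ^ (1/2:ℝ))) := by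
            apply mul_le_mul_right
            apply mul_le_mul_left
            apply ENNReal.inv_le_inv'
            exact ENNReal.ofReal_le_ofReal (pow_le_pow_left₀ hR0.le hx.le _)
        _ = Kε := by rw [hKεdef]; ring
    calc ‖u x‖ ^ 2 = (ENNReal.ofReal (‖u x‖ ^ 2)).toReal := by
          rw [ENNReal.toReal_ofReal (sq_nonneg _)]
      _ ≤ Kε.toReal := ENNReal.toReal_mono hKεT hle
      _ = K := by rw [hKdef]
  -- the final computation
  set a₀ : ℝ := A₀.toReal with ha₀
  set b₀ : ℝ := B₀.toReal with hb₀
  have ha₀0 : 0 ≤ a₀ := ENNReal.toReal_nonneg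
  have hb₀0 : 0 ≤ b₀ := ENNReal.toReal_nonneg
  have hIu : ∫ x : E, ‖u x‖ ^ 2 = cd' * a₀ := by
    rw [integral_norm_sq_eq_toReal hu2.aestronglyMeasurable, hA, ENNReal.toReal_mul]
  have hID : ∫ x : E, ‖fderiv ℝ u x‖ ^ 2 = cd' * b₀ := by
    rw [integral_norm_sq_eq_toReal hD2.aestronglyMeasurable, hB, ENNReal.toReal_mul]
  have hKval : K = 2 * ((R:ℝ) ^ (d-1))⁻¹ * (a₀ ^ (1/2:ℝ) * b₀ ^ (1/2:ℝ)) := by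
    rw [hKdef, hKεdef, ENNReal.toReal_mul, ENNReal.toReal_mul, ENNReal.toReal_mul,
      ENNReal.toReal_inv, ENNReal.toReal_ofReal (pow_nonneg hR0.le _),
      ← ENNReal.toReal_rpow, ← ENNReal.toReal_rpow]
    norm_num
    exact Or.inl rfl
  have husq_int : Integrable (fun x : E => ‖u x‖ ^ 2) volume := hu2.norm.integrable_sq
  set S : Set E := {x : E | R < ‖x‖} with hSdef
  have hSmeas : MeasurableSet S := (isOpen_lt continuous_const continuous_norm).measurableSet
  have hptwise : ∀ x ∈ S, ‖x‖ ^ (-b) * ‖u x‖ ^ (σ + 2) ≤ R ^ (-b) * K ^ (σ/2) * ‖u x‖ ^ 2 := by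
    intro x hx
    have hx' : R < ‖x‖ := hx
    have h1 : ‖x‖ ^ (-b) ≤ R ^ (-b) := by
      rw [Real.rpow_neg (norm_nonneg x), Real.rpow_neg hR0.le]
      exact inv_anti₀ (Real.rpow_pos_of_pos hR0 b)
        (Real.rpow_le_rpow hR0.le hx'.le hb.le)
    have h2 : ‖u x‖ ^ (σ + 2) = ‖u x‖ ^ σ * ‖u x‖ ^ 2 := by
      rw [Real.rpow_add' (norm_nonneg _) (by positivity)]
      congr 1
      rw [show ((2:ℝ)) = ((2:ℕ):ℝ) by norm_num, Real.rpow_natCast]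
    have h3 : ‖u x‖ ^ σ ≤ K ^ (σ/2) := by
      have he : ‖u x‖ ^ σ = (‖u x‖ ^ 2) ^ (σ/2) := by
        rw [← Real.rpow_natCast (‖u x‖) 2, ← Real.rpow_mul (norm_nonneg _)]
        congr 1
        ring
      rw [he]
      exact Real.rpow_le_rpow (by positivity) (hKbd x hx') (by positivity)
    calc ‖x‖ ^ (-b) * ‖u x‖ ^ (σ + 2) = ‖x‖ ^ (-b) * (‖u x‖ ^ σ * ‖u x‖ ^ 2) := by rw [h2]
      _ ≤ R ^ (-b) * (K ^ (σ/2) * ‖u x‖ ^ 2) :=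
          mul_le_mul h1 (mul_le_mul_of_nonneg_right h3 (by positivity)) (by positivity)
            (by positivity)
      _ = R ^ (-b) * K ^ (σ/2) * ‖u x‖ ^ 2 := by ring
  have hmain : (∫ x in S, ‖x‖ ^ (-b) * ‖u x‖ ^ (σ + 2)) ≤
      R ^ (-b) * K ^ (σ/2) * (cd' * a₀) := by
    calc (∫ x in S, ‖x‖ ^ (-b) * ‖u x‖ ^ (σ + 2))
        ≤ ∫ x in S, R ^ (-b) * K ^ (σ/2) * ‖u x‖ ^ 2 := by
          apply integral_mono_of_nonneg
          · exact Filter.Eventually.of_forall fun x => by positivity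
          · exact (husq_int.const_mul _).restrict
          · exact (ae_restrict_iff' hSmeas).mpr (Filter.Eventually.of_forall hptwise)
      _ = R ^ (-b) * K ^ (σ/2) * ∫ x in S, ‖u x‖ ^ 2 := by rw [integral_const_mul]
      _ ≤ R ^ (-b) * K ^ (σ/2) * ∫ x : E, ‖u x‖ ^ 2 := by
          apply mul_le_mul_of_nonneg_left _ (by positivity)
          exact setIntegral_le_integral husq_int
            (Filter.Eventually.of_forall fun x => sq_nonneg _)
      _ = R ^ (-b) * K ^ (σ/2) * (cd' * a₀) := by rw [hIu]
  refine le_trans hmain ?_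
  rw [hIu, hID, hKval]
  -- pure algebra from here
  have h2R : ((R:ℝ) ^ (d-1))⁻¹ = R ^ (-((d:ℝ)-1)) := by
    rw [← Real.rpow_natCast R (d-1), ← Real.rpow_neg hR0.le]
    congr 1
    rw [Nat.cast_sub (by omega : 1 ≤ d)]
    push_cast
    ring
  set e : ℝ := -(((d:ℝ)-1)*σ + 2*b)/2 with hedef
  have hLHS : R ^ (-b) * (2 * ((R:ℝ) ^ (d-1))⁻¹ * (a₀ ^ (1/2:ℝ) * b₀ ^ (1/2:ℝ))) ^ (σ/2) *
      (cd' * a₀) = 2 ^ (σ/2) * R ^ e * a₀ ^ (σ/4) * b₀ ^ (σ/4) * cd' * a₀ := by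
    rw [h2R]
    rw [Real.mul_rpow (by positivity) (by positivity),
        Real.mul_rpow (by positivity) (Real.rpow_nonneg hR0.le _),
        Real.mul_rpow (Real.rpow_nonneg ha₀0 _) (Real.rpow_nonneg hb₀0 _),
        ← Real.rpow_mul hR0.le, ← Real.rpow_mul ha₀0, ← Real.rpow_mul hb₀0]
    rw [show (1/2:ℝ)*(σ/2) = σ/4 by ring]
    rw [show R ^ (-b) * (2 ^ (σ/2) * R ^ (-((d:ℝ)-1) * (σ/2)) * (a₀ ^ (σ/4) * b₀ ^ (σ/4))) *
        (cd' * a₀) = 2 ^ (σ/2) * (R ^ (-b) * R ^ (-((d:ℝ)-1) * (σ/2))) * a₀ ^ (σ/4) *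
        b₀ ^ (σ/4) * cd' * a₀ by ring]
    rw [← Real.rpow_add hR0]
    rw [show -b + -((d:ℝ)-1) * (σ/2) = e by rw [hedef]; ring]
  have hRHS : 2 ^ (σ/2) * cd' ^ (-(σ/2)) * R ^ e * (cd' * a₀) ^ ((σ+4)/4) *
      (cd' * b₀) ^ (σ/4) = 2 ^ (σ/2) * R ^ e * a₀ ^ (σ/4) * b₀ ^ (σ/4) * cd' * a₀ := by
    rw [Real.mul_rpow hcd'pos.le ha₀0, Real.mul_rpow hcd'pos.le hb₀0]
    have hcdpow : cd' ^ (-(σ/2)) * cd' ^ ((σ+4)/4) * cd' ^ (σ/4) = cd' := by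
      rw [← Real.rpow_add hcd'pos, ← Real.rpow_add hcd'pos,
        show -(σ/2) + (σ+4)/4 + σ/4 = 1 by ring, Real.rpow_one]
    have hapow : a₀ ^ ((σ+4)/4) = a₀ ^ (σ/4) * a₀ := by
      rw [show (σ+4)/4 = σ/4 + 1 by ring, Real.rpow_add' ha₀0 (by positivity), Real.rpow_one]
    rw [hapow]
    calc 2 ^ (σ/2) * cd' ^ (-(σ/2)) * R ^ e * (cd' ^ ((σ+4)/4) * (a₀ ^ (σ/4) * a₀)) *
        (cd' ^ (σ/4) * b₀ ^ (σ/4))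
        = 2 ^ (σ/2) * R ^ e * a₀ ^ (σ/4) * b₀ ^ (σ/4) *
          (cd' ^ (-(σ/2)) * cd' ^ ((σ+4)/4) * cd' ^ (σ/4)) * a₀ := by ring
      _ = 2 ^ (σ/2) * R ^ e * a₀ ^ (σ/4) * b₀ ^ (σ/4) * cd' * a₀ := by rw [hcdpow]
  rw [hLHS, hRHS]
end
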